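/- arXiv:1310.7864 — 2 statements merged into one kernel-verified Lean document; each statement's English description precedes it below -/
import Mathlib

section
/- Let k ≥ 1, I₀ a dyadic interval, and for each I ∈ D_k(I₀) let a_I⁺ = 1 + α_I and a_I⁻ = 1 − α_I with |α_I| ≤ 1/4 and Σ_I α_I = 0. For a dyadic interval I with I ⊆ I₀, |I| ≥ 2^{−k}|I₀|, and I ≠ I₀, define θ_I^± = (Σ_{J ∈ D_k(I₀), J ⊆ I} a_J^±) / (Σ_{J ∈ D_k(I₀), J ⊆ Ĩ} a_J^±), where Ĩ is the dyadic parent of I. Then 3/10 ≤ θ_I^± ≤ 5/6, θ_{I⁺}^± + θ_{I⁻}^± = 1, and for every I ∈ D_k(I₀), the product of θ_J^± over all dyadic J with I ⊆ J ⊊ I₀ equals 2^{−k} a_I^±. -/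
open Finset
noncomputable section

/-- Sum of the leaf weights `a_J`, `J ∈ D_k(I₀)`, over the leaves `J ⊆ I`, where `I` is the
node of the dyadic tree at depth `n` with index `r < 2^n` (its leaves are
`s ∈ [r·2^{k-n}, (r+1)·2^{k-n})`). -/
def leafSum (a : ℕ → ℝ) (k n r : ℕ) : ℝ :=
  ∑ s ∈ Finset.Ico (r * 2 ^ (k - n)) ((r + 1) * 2 ^ (k - n)), a s

/-- `θ_I = (Σ_{J ∈ D_k(I₀), J ⊆ I} a_J) / (Σ_{J ∈ D_k(I₀), J ⊆ Ĩ} a_J)`, where `I` is the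
node at depth `n ≥ 1` with index `r` and `Ĩ = (n-1, r/2)` is its dyadic parent. -/
def theta (a : ℕ → ℝ) (k n r : ℕ) : ℝ := leafSum a k n r / leafSum a k (n - 1) (r / 2)

/-!
A node at depth `n` carries `2^(k-n)` leaves, so when all weights lie in `[m, M]` its leaf sum
lies in `[m 2^(k-n), M 2^(k-n)]`, while its parent's lies in `[2m 2^(k-n), 2M 2^(k-n)]`; hence
`m/(2M) ≤ θ ≤ M/(2m)`, which is `[3/10, 5/6]` for `[m, M] = [3/4, 5/4]`. The leaf sum of a
node is the sum of those of its two children, which gives `θ_{I⁺} + θ_{I⁻} = 1`, and the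
product of `θ` along the chain of ancestors of a leaf telescopes to `a_I / Σ_J a_J = 2^{-k} a_I`.
-/

theorem prod_Icc_one_div_pred {G₀ : Type*} [CommGroupWithZero G₀] (f : ℕ → G₀) {j : ℕ}
    (hf : ∀ i ≤ j, f i ≠ 0) : ∏ n ∈ Icc 1 j, f n / f (n - 1) = f j / f 0 := by
  induction j with
  | zero => simp [div_self (hf 0 le_rfl)]
  | succ j ih =>
    rw [prod_Icc_succ_top (by omega), ih fun i hi => hf i (by omega), Nat.add_sub_cancel,
      div_mul_div_cancel₀' (hf j (by omega))]

theorem Nat.div_two_pow_sub_succ_div_two {r k n : ℕ} (hn : n < k) :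
    r / 2 ^ (k - (n + 1)) / 2 = r / 2 ^ (k - n) := by
  rw [Nat.div_div_eq_div_mul, ← pow_succ]
  congr 2
  omega

section LeafSum

variable (a : ℕ → ℝ) {k n r : ℕ}

theorem card_leaves : #(Ico (r * 2 ^ (k - n)) ((r + 1) * 2 ^ (k - n))) = 2 ^ (k - n) := by
  rw [Nat.card_Ico, add_mul, one_mul, Nat.add_sub_cancel_left]

theorem leaves_subset_range (hn : n ≤ k) (hr : r < 2 ^ n) :
    Ico (r * 2 ^ (k - n)) ((r + 1) * 2 ^ (k - n)) ⊆ range (2 ^ k) := by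
  intro s hs
  have hpow : 2 ^ n * 2 ^ (k - n) = 2 ^ k := by rw [← pow_add, Nat.add_sub_cancel' hn]
  have := Nat.mul_le_mul_right (2 ^ (k - n)) (show r + 1 ≤ 2 ^ n from hr)
  rw [mem_Ico] at hs
  rw [mem_range]
  omega

variable {a}

theorem le_leafSum {m : ℝ} (hm : ∀ s < 2 ^ k, m ≤ a s) (hn : n ≤ k) (hr : r < 2 ^ n) :
    m * 2 ^ (k - n) ≤ leafSum a k n r := by
  have := card_nsmul_le_sum _ a m fun s hs =>
    hm s (mem_range.mp (leaves_subset_range hn hr hs))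
  rw [card_leaves, nsmul_eq_mul, Nat.cast_pow, Nat.cast_two] at this
  rwa [leafSum, mul_comm m]

theorem leafSum_le {M : ℝ} (hM : ∀ s < 2 ^ k, a s ≤ M) (hn : n ≤ k) (hr : r < 2 ^ n) :
    leafSum a k n r ≤ M * 2 ^ (k - n) := by
  have := sum_le_card_nsmul _ a M fun s hs =>
    hM s (mem_range.mp (leaves_subset_range hn hr hs))
  rw [card_leaves, nsmul_eq_mul, Nat.cast_pow, Nat.cast_two] at this
  rwa [leafSum, mul_comm M]

theorem leafSum_pos (ha : ∀ s < 2 ^ k, 0 < a s) (hn : n ≤ k) (hr : r < 2 ^ n) :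
    0 < leafSum a k n r :=
  sum_pos (fun s hs => ha s (mem_range.mp (leaves_subset_range hn hr hs)))
    (nonempty_Ico.mpr (Nat.mul_lt_mul_of_pos_right (Nat.lt_succ_self r) (by positivity)))

variable (a)

theorem leafSum_eq_add (hn : n < k) :
    leafSum a k n r = leafSum a k (n + 1) (2 * r) + leafSum a k (n + 1) (2 * r + 1) := by
  have hpow : 2 ^ (k - n) = 2 ^ (k - (n + 1)) * 2 := by rw [← pow_succ]; congr 1; omega
  have hlo : r * 2 ^ (k - n) = 2 * r * 2 ^ (k - (n + 1)) := by rw [hpow]; ring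
  have hhi : (r + 1) * 2 ^ (k - n) = (2 * r + 1 + 1) * 2 ^ (k - (n + 1)) := by rw [hpow]; ring
  rw [leafSum, hlo, hhi, ← sum_Ico_consecutive a (Nat.mul_le_mul_right _ (Nat.le_succ _))
    (Nat.mul_le_mul_right _ (Nat.le_succ _))]
  rfl

theorem leafSum_self : leafSum a k k r = a r := by
  simp [leafSum]

theorem leafSum_zero_zero : leafSum a k 0 0 = ∑ s ∈ range (2 ^ k), a s := by
  rw [leafSum, Nat.sub_zero, zero_mul, zero_add, one_mul, range_eq_Ico]

end LeafSum

section Theta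

variable {a : ℕ → ℝ} {k : ℕ}

theorem theta_mem_Icc {m M : ℝ} (hm : 0 < m) (ha : ∀ s < 2 ^ k, m ≤ a s ∧ a s ≤ M)
    {n r : ℕ} (hn₁ : 1 ≤ n) (hnk : n ≤ k) (hr : r < 2 ^ n) :
    theta a k n r ∈ Set.Icc (m / (2 * M)) (M / (2 * m)) := by
  have hr' : r / 2 < 2 ^ (n - 1) := by
    rw [Nat.div_lt_iff_lt_mul two_pos, ← pow_succ, Nat.sub_add_cancel hn₁]
    exact hr
  have hpow : (2 : ℝ) ^ (k - (n - 1)) = 2 * 2 ^ (k - n) := by rw [← pow_succ']; congr 1; omega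
  have hC₁ := le_leafSum (fun s hs => (ha s hs).1) hnk hr
  have hC₂ := leafSum_le (fun s hs => (ha s hs).2) hnk hr
  have hP₁ := le_leafSum (fun s hs => (ha s hs).1) (by omega) hr'
  have hP₂ := leafSum_le (fun s hs => (ha s hs).2) (by omega) hr'
  rw [hpow] at hP₁ hP₂
  have h2 : (0 : ℝ) < 2 ^ (k - n) := by positivity
  have hP : 0 < leafSum a k (n - 1) (r / 2) := by nlinarith
  have hM : 0 < M := hm.trans_le ((ha 0 (by positivity)).1.trans (ha 0 (by positivity)).2)
  constructor
  · rw [theta, div_le_div_iff₀ (by positivity) hP]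
    nlinarith
  · rw [theta, div_le_div_iff₀ hP (by positivity)]
    nlinarith

theorem theta_add_theta (ha : ∀ s < 2 ^ k, 0 < a s) {n r : ℕ} (hn : n < k) (hr : r < 2 ^ n) :
    theta a k (n + 1) (2 * r) + theta a k (n + 1) (2 * r + 1) = 1 := by
  have h₀ : 2 * r / 2 = r := by omega
  have h₁ : (2 * r + 1) / 2 = r := by omega
  rw [theta, theta, Nat.add_sub_cancel, h₀, h₁, ← add_div, ← leafSum_eq_add a hn,
    div_self (leafSum_pos ha hn.le hr).ne']

theorem prod_theta_ancestors (ha : ∀ s < 2 ^ k, 0 < a s) {r : ℕ} (hr : r < 2 ^ k) :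
    ∏ n ∈ Icc 1 k, theta a k n (r / 2 ^ (k - n)) = a r / ∑ s ∈ range (2 ^ k), a s := by
  set f : ℕ → ℝ := fun j => leafSum a k j (r / 2 ^ (k - j))
  have hanc : ∀ j ≤ k, r / 2 ^ (k - j) < 2 ^ j := fun j hj => by
    rw [Nat.div_lt_iff_lt_mul (by positivity), ← pow_add, Nat.add_sub_cancel' hj]
    exact hr
  have hθ : ∀ n ∈ Icc 1 k, theta a k n (r / 2 ^ (k - n)) = f n / f (n - 1) := fun n hn => by
    obtain ⟨hn₁, hnk⟩ := mem_Icc.mp hn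
    obtain ⟨j, rfl⟩ : ∃ j, n = j + 1 := ⟨n - 1, by omega⟩
    rw [theta, Nat.div_two_pow_sub_succ_div_two (by omega)]
    rfl
  rw [prod_congr rfl hθ, prod_Icc_one_div_pred f fun j hj => (leafSum_pos ha hj (hanc j hj)).ne']
  simp only [f, Nat.sub_self, Nat.sub_zero, pow_zero, Nat.div_one, Nat.div_eq_of_lt hr,
    leafSum_self, leafSum_zero_zero]

theorem theta_properties_of_weights (ha : ∀ s < 2 ^ k, 3 / 4 ≤ a s ∧ a s ≤ 5 / 4)
    (hsum : ∑ s ∈ range (2 ^ k), a s = 2 ^ k) :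
    (∀ n r, 1 ≤ n → n ≤ k → r < 2 ^ n → 3 / 10 ≤ theta a k n r ∧ theta a k n r ≤ 5 / 6) ∧
    (∀ n r, n < k → r < 2 ^ n → theta a k (n + 1) (2 * r) + theta a k (n + 1) (2 * r + 1) = 1) ∧
    (∀ r < 2 ^ k, ∏ n ∈ Icc 1 k, theta a k n (r / 2 ^ (k - n)) = (2 : ℝ) ^ (-(k : ℤ)) * a r) := by
  have hpos : ∀ s < 2 ^ k, 0 < a s := fun s hs => by linarith [(ha s hs).1]
  refine ⟨fun n r hn₁ hnk hr => ?_, fun n r hn hr => theta_add_theta hpos hn hr,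
    fun r hr => ?_⟩
  · have := theta_mem_Icc (by norm_num) ha hn₁ hnk hr
    norm_num at this
    exact this
  · rw [prod_theta_ancestors hpos hr, hsum, zpow_neg, zpow_natCast, div_eq_inv_mul]

end Theta

theorem theta_properties_general (k : ℕ) (α : ℕ → ℝ)
    (hα : ∀ r < 2 ^ k, |α r| ≤ 1 / 4)
    (hsum : ∑ r ∈ Finset.range (2 ^ k), α r = 0) :
    (∀ n r, 1 ≤ n → n ≤ k → r < 2 ^ n →
      (3 / 10 ≤ theta (fun s => 1 + α s) k n r ∧ theta (fun s => 1 + α s) k n r ≤ 5 / 6) ∧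
      (3 / 10 ≤ theta (fun s => 1 - α s) k n r ∧ theta (fun s => 1 - α s) k n r ≤ 5 / 6)) ∧
    (∀ n r, n < k → r < 2 ^ n →
      theta (fun s => 1 + α s) k (n + 1) (2 * r) +
        theta (fun s => 1 + α s) k (n + 1) (2 * r + 1) = 1 ∧
      theta (fun s => 1 - α s) k (n + 1) (2 * r) +
        theta (fun s => 1 - α s) k (n + 1) (2 * r + 1) = 1) ∧
    (∀ r < 2 ^ k,
      (∏ n ∈ Finset.Icc 1 k, theta (fun s => 1 + α s) k n (r / 2 ^ (k - n))) =
        (2 : ℝ) ^ (-(k : ℤ)) * (1 + α r) ∧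
      (∏ n ∈ Finset.Icc 1 k, theta (fun s => 1 - α s) k n (r / 2 ^ (k - n))) =
        (2 : ℝ) ^ (-(k : ℤ)) * (1 - α r)) := by
  have hα' := fun s hs => abs_le.mp (hα s hs)
  obtain ⟨hθp, haddp, hprodp⟩ := theta_properties_of_weights (a := fun s => 1 + α s)
    (fun s hs => ⟨by linarith [hα' s hs], by linarith [hα' s hs]⟩)
    (by simp [sum_add_distrib, hsum])
  obtain ⟨hθm, haddm, hprodm⟩ := theta_properties_of_weights (a := fun s => 1 - α s)
    (fun s hs => ⟨by linarith [hα' s hs], by linarith [hα' s hs]⟩)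
    (by simp [sum_sub_distrib, hsum])
  exact ⟨fun n r hn₁ hnk hr => ⟨hθp n r hn₁ hnk hr, hθm n r hn₁ hnk hr⟩,
    fun n r hn hr => ⟨haddp n r hn hr, haddm n r hn hr⟩,
    fun r hr => ⟨hprodp r hr, hprodm r hr⟩⟩

/-- with `a_I^± = 1 ± α_I`, `|α_I| ≤ 1/4`, `Σ α_I = 0`, the ratios
`θ_I^±` satisfy `3/10 ≤ θ_I^± ≤ 5/6`, `θ_{I⁺}^± + θ_{I⁻}^± = 1`, and for each leaf
`I ∈ D_k(I₀)` the product of `θ_J^±` over all `J` with `I ⊆ J ⊊ I₀` is `2^{-k} a_I^±`. -/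
theorem theta_properties (k : ℕ) (hk : 1 ≤ k) (α : ℕ → ℝ)
    (hα : ∀ r < 2 ^ k, |α r| ≤ 1 / 4)
    (hsum : ∑ r ∈ Finset.range (2 ^ k), α r = 0) :
    (∀ n r, 1 ≤ n → n ≤ k → r < 2 ^ n →
      (3 / 10 ≤ theta (fun s => 1 + α s) k n r ∧ theta (fun s => 1 + α s) k n r ≤ 5 / 6) ∧
      (3 / 10 ≤ theta (fun s => 1 - α s) k n r ∧ theta (fun s => 1 - α s) k n r ≤ 5 / 6)) ∧
    (∀ n r, n < k → r < 2 ^ n →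
      theta (fun s => 1 + α s) k (n + 1) (2 * r) +
        theta (fun s => 1 + α s) k (n + 1) (2 * r + 1) = 1 ∧
      theta (fun s => 1 - α s) k (n + 1) (2 * r) +
        theta (fun s => 1 - α s) k (n + 1) (2 * r + 1) = 1) ∧
    (∀ r < 2 ^ k,
      (∏ n ∈ Finset.Icc 1 k, theta (fun s => 1 + α s) k n (r / 2 ^ (k - n))) =
        (2 : ℝ) ^ (-(k : ℤ)) * (1 + α r) ∧
      (∏ n ∈ Finset.Icc 1 k, theta (fun s => 1 - α s) k n (r / 2 ^ (k - n))) =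
        (2 : ℝ) ^ (-(k : ℤ)) * (1 - α r)) :=
  theta_properties_general k α hα hsum
end
end

section
/- Main estimate (Bellman lemma): Let B: D → ℝ satisfy: (i) D ⊆ X × ℝ × X* × ℝ is the convex set {(f,F,g,G) : ‖f‖_X^p ≤ F, ‖g‖_{X*}^{p'} ≤ G}; (ii) 0 ≤ B ≤ 4 β F^{1/p} G^{1/p'} on D; (iii) for A = (A⁺+A⁻)/2 with A, A⁺, A⁻ ∈ D, B(A) ≥ (B(A⁺)+B(A⁻))/2 + |⟨f⁺−f⁻, g⁺−g⁻⟩_{X,X*}|. Fix k ≥ 1, a dyadic interval I₀, and points A_I ∈ D for all I ∈ D_n(I₀), 0 ≤ n ≤ k, satisfying A_I = (A_{I⁺}+A_{I⁻})/2. Define λ_{KL} = ⟨(f_K−f_{I₀})/2^k, (g_L−g_{I₀})/2^k⟩ + ⟨(f_L−f_{I₀})/2^k, (g_K−g_{I₀})/2^k⟩ for K, L ∈ D_k(I₀). Then Σ_{K,L ∈ D_k(I₀)} |λ_{KL}| ≤ c · 2^{k/2} ( B(A_{I₀}) − 2^{−k} Σ_{I ∈ D_k(I₀)} B(A_I) )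 for some absolute constant c > 0. -/
open Finset
noncomputable section

/-- The Bellman domain `{(f,F,g,G) : ‖f‖^p ≤ F, ‖g‖^{p'} ≤ G}`. -/
def BellmanDomain (X : Type) [NormedAddCommGroup X] [NormedSpace ℝ X] (p q : ℝ) :
    Set (X × ℝ × (X →L[ℝ] ℝ) × ℝ) :=
  {A | ‖A.1‖ ^ p ≤ A.2.1 ∧ ‖A.2.2.1‖ ^ q ≤ A.2.2.2}



/-- sign vector attached to a subset -/
def bmSg (s : Finset ℕ) (L : ℕ) : ℝ := if L ∈ s then 1 else -1

lemma bmSg_sign (s : Finset ℕ) (L : ℕ) : bmSg s L = 1 ∨ bmSg s L = -1 := by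
  unfold bmSg; split <;> simp

lemma bmSg_insert_self {s : Finset ℕ} {n : ℕ} : bmSg (insert n s) n = 1 := by
  simp [bmSg]

lemma bmSg_insert_ne {s : Finset ℕ} {n L : ℕ} (h : L ≠ n) :
    bmSg (insert n s) L = bmSg s L := by
  simp [bmSg, Finset.mem_insert, h]

lemma bmSg_not_mem {s : Finset ℕ} {n : ℕ} (h : n ∉ s) : bmSg s n = -1 := by
  simp [bmSg, h]

section
variable (N : ℕ) (a : ℕ → ℝ)

lemma bm_split (hN : N ∉ range N) :
    (∀ s ∈ (range N).powerset,
        (∑ L ∈ insert N (range N), a L * bmSg s L)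
          = (∑ L ∈ range N, a L * bmSg s L) - a N) ∧
    (∀ s ∈ (range N).powerset,
        (∑ L ∈ insert N (range N), a L * bmSg (insert N s) L)
          = (∑ L ∈ range N, a L * bmSg s L) + a N) := by
  constructor
  · intro s hs
    rw [Finset.sum_insert hN]
    have hns : N ∉ s := fun h => hN (Finset.mem_powerset.mp hs h)
    rw [bmSg_not_mem hns]; ring
  · intro s hs
    rw [Finset.sum_insert hN, bmSg_insert_self]
    have : ∀ L ∈ range N, a L * bmSg (insert N s) L = a L * bmSg s L := by
      intro L hL
      rw [bmSg_insert_ne (by exact fun h => hN (h ▸ hL))]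
    rw [Finset.sum_congr rfl this]; ring

lemma bm_m2 :
    ∑ s ∈ (range N).powerset, (∑ L ∈ range N, a L * bmSg s L) ^ 2
      = 2 ^ N * ∑ L ∈ range N, (a L) ^ 2 := by
  induction N with
  | zero => simp
  | succ N ih =>
    have hN : N ∉ range N := by simp
    obtain ⟨hX, hX'⟩ := bm_split N a hN
    rw [Finset.range_add_one, Finset.sum_powerset_insert hN]
    have e1 : ∑ s ∈ (range N).powerset, (∑ L ∈ insert N (range N), a L * bmSg s L) ^ 2
        = ∑ s ∈ (range N).powerset, ((∑ L ∈ range N, a L * bmSg s L) - a N) ^ 2 :=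
      Finset.sum_congr rfl fun s hs => by rw [hX s hs]
    have e2 : ∑ s ∈ (range N).powerset,
          (∑ L ∈ insert N (range N), a L * bmSg (insert N s) L) ^ 2
        = ∑ s ∈ (range N).powerset, ((∑ L ∈ range N, a L * bmSg s L) + a N) ^ 2 :=
      Finset.sum_congr rfl fun s hs => by rw [hX' s hs]
    rw [e1, e2, ← Finset.sum_add_distrib]
    have expand : ∀ s ∈ (range N).powerset,
        ((∑ L ∈ range N, a L * bmSg s L) - a N) ^ 2
          + ((∑ L ∈ range N, a L * bmSg s L) + a N) ^ 2
        = 2 * (∑ L ∈ range N, a L * bmSg s L) ^ 2 + 2 * a N ^ 2 := by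
      intro s _; ring
    rw [Finset.sum_congr rfl expand, Finset.sum_add_distrib, ← Finset.mul_sum, ih,
        Finset.sum_const, Finset.card_powerset, Finset.card_range, Finset.sum_insert hN,
        nsmul_eq_mul, pow_succ]
    push_cast
    ring

lemma bm_m4 :
    ∑ s ∈ (range N).powerset, (∑ L ∈ range N, a L * bmSg s L) ^ 4
      ≤ 3 * 2 ^ N * (∑ L ∈ range N, (a L) ^ 2) ^ 2 := by
  induction N with
  | zero => simp
  | succ N ih =>
    have hN : N ∉ range N := by simp
    obtain ⟨hX, hX'⟩ := bm_split N a hN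
    rw [Finset.range_add_one, Finset.sum_powerset_insert hN]
    have e1 : ∑ s ∈ (range N).powerset, (∑ L ∈ insert N (range N), a L * bmSg s L) ^ 4
        = ∑ s ∈ (range N).powerset, ((∑ L ∈ range N, a L * bmSg s L) - a N) ^ 4 :=
      Finset.sum_congr rfl fun s hs => by rw [hX s hs]
    have e2 : ∑ s ∈ (range N).powerset,
          (∑ L ∈ insert N (range N), a L * bmSg (insert N s) L) ^ 4
        = ∑ s ∈ (range N).powerset, ((∑ L ∈ range N, a L * bmSg s L) + a N) ^ 4 :=
      Finset.sum_congr rfl fun s hs => by rw [hX' s hs]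
    rw [e1, e2, ← Finset.sum_add_distrib]
    have expand : ∀ s ∈ (range N).powerset,
        ((∑ L ∈ range N, a L * bmSg s L) - a N) ^ 4
          + ((∑ L ∈ range N, a L * bmSg s L) + a N) ^ 4
        = 2 * (∑ L ∈ range N, a L * bmSg s L) ^ 4
          + 12 * a N ^ 2 * (∑ L ∈ range N, a L * bmSg s L) ^ 2 + 2 * a N ^ 4 := by
      intro s _; ring
    rw [Finset.sum_congr rfl expand, Finset.sum_add_distrib, Finset.sum_add_distrib,
        ← Finset.mul_sum, ← Finset.mul_sum, bm_m2, Finset.sum_const, Finset.card_powerset,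
        Finset.card_range, Finset.sum_insert hN]
    have hσ : 0 ≤ ∑ L ∈ range N, (a L) ^ 2 :=
      Finset.sum_nonneg fun i _ => sq_nonneg _
    have h2N : (0:ℝ) < 2 ^ N := by positivity
    rw [nsmul_eq_mul]
    push_cast
    have h4 : (0:ℝ) ≤ 2 ^ N * (a N) ^ 4 := by positivity
    have expand2 : 3 * 2 ^ (N+1) * ((a N) ^ 2 + ∑ L ∈ range N, (a L) ^ 2) ^ 2
        = 2 * (3 * 2 ^ N * (∑ L ∈ range N, (a L) ^ 2) ^ 2)
          + 12 * (a N) ^ 2 * (2 ^ N * ∑ L ∈ range N, (a L) ^ 2)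
          + 2 ^ N * (2 * (a N) ^ 4) + 4 * (2 ^ N * (a N) ^ 4) := by ring
    rw [expand2]
    linarith [ih, h4]

end

lemma bm_khintchine (N : ℕ) (a : ℕ → ℝ) :
    (2 ^ N : ℝ) * Real.sqrt (∑ L ∈ range N, (a L) ^ 2)
      ≤ Real.sqrt 3 * ∑ s ∈ (range N).powerset, |∑ L ∈ range N, a L * bmSg s L| := by
  set σ2 := ∑ L ∈ range N, (a L) ^ 2 with hσ2
  have hσ2nn : 0 ≤ σ2 := Finset.sum_nonneg fun i _ => sq_nonneg _
  set T := ∑ s ∈ (range N).powerset, |∑ L ∈ range N, a L * bmSg s L| with hT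
  have hTnn : 0 ≤ T := Finset.sum_nonneg fun s _ => abs_nonneg _
  rcases eq_or_lt_of_le hσ2nn with h0 | hσ2pos
  · rw [← h0, Real.sqrt_zero, mul_zero]
    positivity
  -- abbreviations
  set X : Finset ℕ → ℝ := fun s => ∑ L ∈ range N, a L * bmSg s L with hXdef
  have hM2 : ∑ s ∈ (range N).powerset, X s ^ 2 = 2 ^ N * σ2 := bm_m2 N a
  have hM4 : ∑ s ∈ (range N).powerset, X s ^ 4 ≤ 3 * 2 ^ N * σ2 ^ 2 := bm_m4 N a
  have hM4nn : 0 ≤ ∑ s ∈ (range N).powerset, X s ^ 4 :=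
    Finset.sum_nonneg fun s _ => by positivity
  have hC3nn : 0 ≤ ∑ s ∈ (range N).powerset, |X s| ^ 3 :=
    Finset.sum_nonneg fun s _ => by positivity
  -- Cauchy-Schwarz 1 : M2^2 ≤ T * C3
  have cs1 : (∑ s ∈ (range N).powerset, X s ^ 2) ^ 2
      ≤ T * ∑ s ∈ (range N).powerset, |X s| ^ 3 := by
    have := Finset.sum_mul_sq_le_sq_mul_sq (range N).powerset
      (fun s => Real.sqrt |X s|) (fun s => |X s| * Real.sqrt |X s|)
    have e1 : ∀ s, Real.sqrt |X s| * (|X s| * Real.sqrt |X s|) = X s ^ 2 := by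
      intro s
      rw [show Real.sqrt |X s| * (|X s| * Real.sqrt |X s|)
          = (Real.sqrt |X s| * Real.sqrt |X s|) * |X s| by ring,
        Real.mul_self_sqrt (abs_nonneg _), ← sq_abs]
      ring
    have e2 : ∀ s, Real.sqrt |X s| ^ 2 = |X s| := fun s => Real.sq_sqrt (abs_nonneg _)
    have e3 : ∀ s, (|X s| * Real.sqrt |X s|) ^ 2 = |X s| ^ 3 := by
      intro s
      rw [mul_pow, Real.sq_sqrt (abs_nonneg _)]
      ring
    simp only [e1, e2, e3] at this
    exact this
  -- Cauchy-Schwarz 2 : C3^2 ≤ M2 * M4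
  have cs2 : (∑ s ∈ (range N).powerset, |X s| ^ 3) ^ 2
      ≤ (2 ^ N * σ2) * ∑ s ∈ (range N).powerset, X s ^ 4 := by
    have := Finset.sum_mul_sq_le_sq_mul_sq (range N).powerset
      (fun s => |X s|) (fun s => X s ^ 2)
    have e1 : ∀ s, |X s| * X s ^ 2 = |X s| ^ 3 := by
      intro s; rw [← sq_abs]; ring
    have e2 : ∀ s, |X s| ^ 2 = X s ^ 2 := fun s => sq_abs _
    have e3 : ∀ s, (X s ^ 2) ^ 2 = X s ^ 4 := fun s => by ring
    simp only [e1, e2, e3] at this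
    rw [← hM2]
    exact this
  -- combine
  have h2N : (0:ℝ) < 2 ^ N := by positivity
  have c3sq : (∑ s ∈ (range N).powerset, |X s| ^ 3) ^ 2
      ≤ 2 ^ N * σ2 * (3 * 2 ^ N * σ2 ^ 2) :=
    le_trans cs2 (mul_le_mul_of_nonneg_left hM4 (by positivity))
  have step1 : ((2:ℝ) ^ N * σ2) ^ 2 ≤ T * ∑ s ∈ (range N).powerset, |X s| ^ 3 := by
    rw [← hM2]; exact cs1
  have big : (((2:ℝ) ^ N * σ2) ^ 2) ^ 2 ≤ T ^ 2 * (2 ^ N * σ2 * (3 * 2 ^ N * σ2 ^ 2)) := by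
    calc (((2:ℝ) ^ N * σ2) ^ 2) ^ 2
        ≤ (T * ∑ s ∈ (range N).powerset, |X s| ^ 3) ^ 2 := by
          apply pow_le_pow_left₀ (by positivity) step1
      _ = T ^ 2 * (∑ s ∈ (range N).powerset, |X s| ^ 3) ^ 2 := by ring
      _ ≤ T ^ 2 * (2 ^ N * σ2 * (3 * 2 ^ N * σ2 ^ 2)) :=
          mul_le_mul_of_nonneg_left c3sq (by positivity)
  have hx2s3 : (0:ℝ) < ((2:ℝ) ^ N) ^ 2 * σ2 ^ 3 := by positivity
  have key : ((2:ℝ) ^ N) ^ 2 * σ2 ≤ 3 * T ^ 2 := by nlinarith [big, hx2s3]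
  -- conclude by taking square roots
  have lhs_eq : (2 ^ N : ℝ) * Real.sqrt σ2 = Real.sqrt (((2:ℝ) ^ N) ^ 2 * σ2) := by
    rw [Real.sqrt_mul (by positivity), Real.sqrt_sq h2N.le]
  have rhs_eq : Real.sqrt (3 * T ^ 2) = Real.sqrt 3 * T := by
    rw [Real.sqrt_mul (by norm_num), Real.sqrt_sq hTnn]
  rw [lhs_eq, ← rhs_eq]
  exact Real.sqrt_le_sqrt key

lemma bm_matrix (N : ℕ) (lam : ℕ → ℕ → ℝ) (C : ℝ)
    (h : ∀ ε δ : ℕ → ℝ, (∀ i, ε i = 1 ∨ ε i = -1) → (∀ i, δ i = 1 ∨ δ i = -1) →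
      |∑ K ∈ range N, ∑ L ∈ range N, ε K * δ L * lam K L| ≤ C) :
    ∑ K ∈ range N, ∑ L ∈ range N, |lam K L|
      ≤ Real.sqrt 3 * Real.sqrt N * C := by
  -- Step A : for each sign vector δ, ∑_K |∑_L δ L * lam K L| ≤ C
  have stepA : ∀ δ : ℕ → ℝ, (∀ i, δ i = 1 ∨ δ i = -1) →
      ∑ K ∈ range N, |∑ L ∈ range N, δ L * lam K L| ≤ C := by
    intro δ hδ
    set t : ℕ → ℝ := fun K => ∑ L ∈ range N, δ L * lam K L with ht
    set ε : ℕ → ℝ := fun K => if 0 ≤ t K then 1 else -1 with hε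
    have hεsign : ∀ i, ε i = 1 ∨ ε i = -1 := by
      intro i; simp only [hε]; split <;> simp
    have habs : ∀ K, |t K| = ε K * t K := by
      intro K
      by_cases h' : 0 ≤ t K
      · simp only [hε, if_pos h']; rw [abs_of_nonneg h']; ring
      · simp only [hε, if_neg h']; rw [abs_of_neg (lt_of_not_ge h')]; ring
    have : ∑ K ∈ range N, |t K| = ∑ K ∈ range N, ∑ L ∈ range N, ε K * δ L * lam K L := by
      rw [Finset.sum_congr rfl fun K _ => habs K]
      refine Finset.sum_congr rfl fun K _ => ?_
      rw [Finset.mul_sum]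
      exact Finset.sum_congr rfl fun L _ => by ring
    rw [this]
    exact le_trans (le_abs_self _) (h ε δ hεsign hδ)
  -- sum of ℓ² norms of the rows is at most √3 C
  have sumrows : ∑ K ∈ range N, Real.sqrt (∑ L ∈ range N, (lam K L) ^ 2)
      ≤ Real.sqrt 3 * C := by
    have h2N : (0:ℝ) < 2 ^ N := by positivity
    have hbig : ∑ s ∈ (range N).powerset,
        (∑ K ∈ range N, |∑ L ∈ range N, lam K L * bmSg s L|) ≤ 2 ^ N * C := by
      calc ∑ s ∈ (range N).powerset, (∑ K ∈ range N, |∑ L ∈ range N, lam K L * bmSg s L|)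
          ≤ ∑ s ∈ (range N).powerset, C := by
            refine Finset.sum_le_sum fun s _ => ?_
            have := stepA (bmSg s) (fun i => bmSg_sign s i)
            calc ∑ K ∈ range N, |∑ L ∈ range N, lam K L * bmSg s L|
                = ∑ K ∈ range N, |∑ L ∈ range N, bmSg s L * lam K L| := by
                  refine Finset.sum_congr rfl fun K _ => ?_
                  congr 1
                  exact Finset.sum_congr rfl fun L _ => mul_comm _ _
              _ ≤ C := this
        _ = 2 ^ N * C := by
            rw [Finset.sum_const, Finset.card_powerset, Finset.card_range, nsmul_eq_mul]
            push_cast; ring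
    have hkh : ∀ K, (2 ^ N : ℝ) * Real.sqrt (∑ L ∈ range N, (lam K L) ^ 2)
        ≤ Real.sqrt 3 * ∑ s ∈ (range N).powerset, |∑ L ∈ range N, lam K L * bmSg s L| :=
      fun K => bm_khintchine N (lam K)
    have hsum : (2 ^ N : ℝ) * ∑ K ∈ range N, Real.sqrt (∑ L ∈ range N, (lam K L) ^ 2)
        ≤ Real.sqrt 3 * (2 ^ N * C) := by
      calc (2 ^ N : ℝ) * ∑ K ∈ range N, Real.sqrt (∑ L ∈ range N, (lam K L) ^ 2)
          = ∑ K ∈ range N, (2 ^ N : ℝ) * Real.sqrt (∑ L ∈ range N, (lam K L) ^ 2) := by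
            rw [Finset.mul_sum]
        _ ≤ ∑ K ∈ range N, Real.sqrt 3
              * ∑ s ∈ (range N).powerset, |∑ L ∈ range N, lam K L * bmSg s L| :=
            Finset.sum_le_sum fun K _ => hkh K
        _ = Real.sqrt 3 * ∑ K ∈ range N,
              ∑ s ∈ (range N).powerset, |∑ L ∈ range N, lam K L * bmSg s L| := by
            rw [Finset.mul_sum]
        _ = Real.sqrt 3 * ∑ s ∈ (range N).powerset,
              (∑ K ∈ range N, |∑ L ∈ range N, lam K L * bmSg s L|) := by
            rw [Finset.sum_comm]
        _ ≤ Real.sqrt 3 * (2 ^ N * C) :=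
            mul_le_mul_of_nonneg_left hbig (Real.sqrt_nonneg 3)
    nlinarith [hsum, h2N]
  -- per-row Cauchy-Schwarz
  have rowb : ∀ K, ∑ L ∈ range N, |lam K L|
      ≤ Real.sqrt N * Real.sqrt (∑ L ∈ range N, (lam K L) ^ 2) := by
    intro K
    have cs := Finset.sum_mul_sq_le_sq_mul_sq (range N) (fun L => |lam K L|) (fun _ => 1)
    simp only [mul_one, one_pow, sq_abs, Finset.sum_const, Finset.card_range,
      nsmul_eq_mul] at cs
    have h1 : (∑ L ∈ range N, |lam K L|) ^ 2 ≤ (∑ L ∈ range N, (lam K L) ^ 2) * N := cs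
    have h2 : ∑ L ∈ range N, |lam K L|
        = Real.sqrt ((∑ L ∈ range N, |lam K L|) ^ 2) :=
      (Real.sqrt_sq (Finset.sum_nonneg fun i _ => abs_nonneg _)).symm
    rw [h2]
    calc Real.sqrt ((∑ L ∈ range N, |lam K L|) ^ 2)
        ≤ Real.sqrt ((∑ L ∈ range N, (lam K L) ^ 2) * N) := Real.sqrt_le_sqrt h1
      _ = Real.sqrt N * Real.sqrt (∑ L ∈ range N, (lam K L) ^ 2) := by
          rw [Real.sqrt_mul (Finset.sum_nonneg fun i _ => sq_nonneg _), mul_comm]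
  calc ∑ K ∈ range N, ∑ L ∈ range N, |lam K L|
      ≤ ∑ K ∈ range N, Real.sqrt N * Real.sqrt (∑ L ∈ range N, (lam K L) ^ 2) :=
        Finset.sum_le_sum fun K _ => rowb K
    _ = Real.sqrt N * ∑ K ∈ range N, Real.sqrt (∑ L ∈ range N, (lam K L) ^ 2) := by
        rw [Finset.mul_sum]
    _ ≤ Real.sqrt N * (Real.sqrt 3 * C) :=
        mul_le_mul_of_nonneg_left sumrows (Real.sqrt_nonneg _)
    _ = Real.sqrt 3 * Real.sqrt N * C := by ring

lemma bm_concave_comb {E : Type} [AddCommGroup E] [Module ℝ E] (D : Set E) (Bf : E → ℝ)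
    (N : ℕ) (x : ℕ → E)
    (hmem : ∀ w : ℕ → ℝ, (∀ K, 0 ≤ w K) → (∑ K ∈ range N, w K) = 1 →
      (∑ K ∈ range N, w K • x K) ∈ D)
    (hconc : ∀ a b, a ∈ D → b ∈ D → (2⁻¹:ℝ) • (a + b) ∈ D →
      (Bf a + Bf b) / 2 ≤ Bf ((2⁻¹:ℝ) • (a + b))) :
    ∀ M : ℕ, ∀ m : ℕ → ℕ, (∑ K ∈ range N, m K) = 2 ^ M →
      ∑ K ∈ range N, ((m K : ℝ) / 2 ^ M) * Bf (x K)
        ≤ Bf (∑ K ∈ range N, ((m K : ℝ) / 2 ^ M) • x K) := by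
  intro M
  induction M with
  | zero =>
    intro m hm
    simp only [pow_zero] at hm ⊢
    -- there is a unique K₀ with m K₀ = 1
    have hne : ∃ i ∈ range N, m i ≠ 0 := by
      by_contra hc
      push_neg at hc
      rw [Finset.sum_eq_zero hc] at hm
      omega
    obtain ⟨K₀, hK₀mem, hK₀⟩ := hne
    have hsplit := Finset.add_sum_erase (range N) m hK₀mem
    have hmK₀ : m K₀ = 1 ∧ ∑ J ∈ (range N).erase K₀, m J = 0 := by omega
    have hzero : ∀ J ∈ (range N).erase K₀, m J = 0 := by
      intro J hJ
      exact (Finset.sum_eq_zero_iff.mp hmK₀.2) J hJ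
    have e1 : ∑ K ∈ range N, ((m K : ℝ) / 1) * Bf (x K) = Bf (x K₀) := by
      rw [Finset.sum_eq_single_of_mem K₀ hK₀mem]
      · rw [hmK₀.1]; norm_num
      · intro J hJ hJne
        rw [hzero J (Finset.mem_erase.mpr ⟨hJne, hJ⟩)]
        norm_num
    have e2 : ∑ K ∈ range N, ((m K : ℝ) / 1) • x K = x K₀ := by
      rw [Finset.sum_eq_single_of_mem K₀ hK₀mem]
      · rw [hmK₀.1]; norm_num
      · intro J hJ hJne
        rw [hzero J (Finset.mem_erase.mpr ⟨hJne, hJ⟩)]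
        norm_num
    rw [e1, e2]
  | succ M ih =>
    intro m hm
    set s : ℕ → ℕ := fun K => ∑ J ∈ range K, m J with hs
    have hsucc : ∀ K, s (K + 1) = s K + m K := fun K => Finset.sum_range_succ m K
    set m1 : ℕ → ℕ := fun K => min (s (K + 1)) (2 ^ M) - min (s K) (2 ^ M) with hm1
    set m2 : ℕ → ℕ := fun K => m K - m1 K with hm2
    have hm1le : ∀ K, m1 K ≤ m K := by
      intro K
      simp only [hm1, hsucc K]
      omega
    have hm1mono : ∀ K, min (s K) (2 ^ M) ≤ min (s (K + 1)) (2 ^ M) := by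
      intro K; simp only [hsucc K]; omega
    -- telescoping sum over ℤ
    have hm1sumZ : (∑ K ∈ range N, (m1 K : ℤ)) = min ((s N : ℤ)) (2 ^ M) := by
      have : ∀ K, ((m1 K : ℤ)) = min ((s (K+1) : ℤ)) (2 ^ M) - min ((s K : ℤ)) (2 ^ M) := by
        intro K
        simp only [hm1]
        have := hm1mono K
        push_cast [Nat.cast_sub this]
        omega
      rw [Finset.sum_congr rfl fun K _ => this K,
        Finset.sum_range_sub (fun K => min ((s K : ℤ)) (2 ^ M))]
      simp [hs]
    have hsN : s N = 2 ^ (M + 1) := hm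
    have hm1sum : (∑ K ∈ range N, m1 K) = 2 ^ M := by
      have h2 : ((∑ K ∈ range N, m1 K : ℕ) : ℤ) = 2 ^ M := by
        push_cast
        rw [hm1sumZ, hsN]
        push_cast
        rw [min_eq_right]
        rw [pow_succ]
        nlinarith [pow_pos (by norm_num : (0:ℤ) < 2) M]
      exact_mod_cast h2
    have hm2sum : (∑ K ∈ range N, m2 K) = 2 ^ M := by
      have : ∑ K ∈ range N, m2 K = (∑ K ∈ range N, m K) - ∑ K ∈ range N, m1 K := by
        simp only [hm2]
        rw [Finset.sum_tsub_distrib]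
        intro i _; exact hm1le i
      rw [this, hm, hm1sum, pow_succ]
      omega
    have hadd : ∀ K, (m K : ℝ) = (m1 K : ℝ) + (m2 K : ℝ) := by
      intro K
      have h' := hm1le K
      have : m1 K + m2 K = m K := by simp only [hm2]; omega
      exact_mod_cast (congrArg (Nat.cast (R := ℝ)) this).symm
    set c1 := ∑ K ∈ range N, ((m1 K : ℝ) / 2 ^ M) • x K with hc1
    set c2 := ∑ K ∈ range N, ((m2 K : ℝ) / 2 ^ M) • x K with hc2
    have hw1 : ∀ (mm : ℕ → ℕ), (∑ K ∈ range N, mm K) = 2 ^ M →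
        (∑ K ∈ range N, ((mm K : ℝ) / 2 ^ M)) = 1 := by
      intro mm hmm
      rw [← Finset.sum_div]
      rw [show (∑ K ∈ range N, (mm K : ℝ)) = 2 ^ M by exact_mod_cast hmm]
      field_simp
    have hc1mem : c1 ∈ D := hmem _ (fun K => by positivity) (hw1 m1 hm1sum)
    have hc2mem : c2 ∈ D := hmem _ (fun K => by positivity) (hw1 m2 hm2sum)
    have hmid : (2⁻¹:ℝ) • (c1 + c2) = ∑ K ∈ range N, ((m K : ℝ) / 2 ^ (M + 1)) • x K := by
      rw [hc1, hc2, ← Finset.sum_add_distrib, Finset.smul_sum]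
      refine Finset.sum_congr rfl fun K _ => ?_
      rw [← add_smul, smul_smul]
      congr 1
      rw [hadd K, pow_succ]
      ring
    have hmidmem : (2⁻¹:ℝ) • (c1 + c2) ∈ D := by
      rw [hmid]
      refine hmem _ (fun K => by positivity) ?_
      rw [← Finset.sum_div]
      rw [show (∑ K ∈ range N, (m K : ℝ)) = 2 ^ (M + 1) by exact_mod_cast hm]
      field_simp
    have hB1 := ih m1 hm1sum
    have hB2 := ih m2 hm2sum
    have hBc := hconc c1 c2 hc1mem hc2mem hmidmem
    rw [hmid] at hBc
    have lhs_eq : ∑ K ∈ range N, ((m K : ℝ) / 2 ^ (M + 1)) * Bf (x K)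
        = ((∑ K ∈ range N, ((m1 K : ℝ) / 2 ^ M) * Bf (x K))
          + ∑ K ∈ range N, ((m2 K : ℝ) / 2 ^ M) * Bf (x K)) / 2 := by
      rw [← Finset.sum_add_distrib, Finset.sum_div]
      refine Finset.sum_congr rfl fun K _ => ?_
      rw [hadd K, pow_succ]
      ring
    rw [lhs_eq]
    calc ((∑ K ∈ range N, ((m1 K : ℝ) / 2 ^ M) * Bf (x K))
          + ∑ K ∈ range N, ((m2 K : ℝ) / 2 ^ M) * Bf (x K)) / 2
        ≤ (Bf c1 + Bf c2) / 2 := by linarith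
      _ ≤ Bf (∑ K ∈ range N, ((m K : ℝ) / 2 ^ (M + 1)) • x K) := hBc

lemma bm_norm_comb {Y : Type*} [NormedAddCommGroup Y] [NormedSpace ℝ Y] {r : ℝ} (hr : 1 ≤ r)
    (N : ℕ) (y : ℕ → Y) (F : ℕ → ℝ) (hyF : ∀ K ∈ range N, ‖y K‖ ^ r ≤ F K)
    (w : ℕ → ℝ) (hw : ∀ K, 0 ≤ w K) (hw1 : ∑ K ∈ range N, w K = 1) :
    ‖∑ K ∈ range N, w K • y K‖ ^ r ≤ ∑ K ∈ range N, w K * F K := by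
  have h0r : 0 ≤ r := le_trans zero_le_one hr
  have step1 : ‖∑ K ∈ range N, w K • y K‖ ≤ ∑ K ∈ range N, w K * ‖y K‖ := by
    calc ‖∑ K ∈ range N, w K • y K‖ ≤ ∑ K ∈ range N, ‖w K • y K‖ := norm_sum_le _ _
      _ = ∑ K ∈ range N, w K * ‖y K‖ := by
          refine Finset.sum_congr rfl fun K _ => ?_
          rw [norm_smul, Real.norm_of_nonneg (hw K)]
  calc ‖∑ K ∈ range N, w K • y K‖ ^ r
      ≤ (∑ K ∈ range N, w K * ‖y K‖) ^ r :=
        Real.rpow_le_rpow (norm_nonneg _) step1 h0r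
    _ ≤ ∑ K ∈ range N, w K * ‖y K‖ ^ r :=
        Real.rpow_arith_mean_le_arith_mean_rpow (range N) w (fun K => ‖y K‖)
          (fun K _ => hw K) hw1 (fun K _ => norm_nonneg _) hr
    _ ≤ ∑ K ∈ range N, w K * F K :=
        Finset.sum_le_sum fun K hK => mul_le_mul_of_nonneg_left (hyF K hK) (hw K)

lemma bm_mem_comb {X : Type} [NormedAddCommGroup X] [NormedSpace ℝ X] {p q : ℝ}
    (hp : 1 ≤ p) (hq : 1 ≤ q) (N : ℕ) (P : ℕ → X × ℝ × (X →L[ℝ] ℝ) × ℝ)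
    (hP : ∀ K ∈ range N, P K ∈ BellmanDomain X p q)
    (w : ℕ → ℝ) (hw : ∀ K, 0 ≤ w K) (hw1 : ∑ K ∈ range N, w K = 1) :
    (∑ K ∈ range N, w K • P K) ∈ BellmanDomain X p q := by
  have hfst : (∑ K ∈ range N, w K • P K).1 = ∑ K ∈ range N, w K • (P K).1 := by
    rw [Prod.fst_sum]; rfl
  have hF : (∑ K ∈ range N, w K • P K).2.1 = ∑ K ∈ range N, w K * (P K).2.1 := by
    rw [Prod.snd_sum, Prod.fst_sum]
    rfl
  have hg : (∑ K ∈ range N, w K • P K).2.2.1 = ∑ K ∈ range N, w K • (P K).2.2.1 := by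
    rw [Prod.snd_sum, Prod.snd_sum, Prod.fst_sum]; rfl
  have hG : (∑ K ∈ range N, w K • P K).2.2.2 = ∑ K ∈ range N, w K * (P K).2.2.2 := by
    rw [Prod.snd_sum, Prod.snd_sum, Prod.snd_sum]
    rfl
  constructor
  · rw [hfst, hF]
    exact bm_norm_comb hp N (fun K => (P K).1) (fun K => (P K).2.1)
      (fun K hK => (hP K hK).1) w hw hw1
  · rw [hg, hG]
    exact bm_norm_comb hq N (fun K => (P K).2.2.1) (fun K => (P K).2.2.2)
      (fun K hK => (hP K hK).2) w hw hw1
section BmDiff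

lemma bm_diff {Y : Type*} [AddCommGroup Y] [Module ℝ Y] (N k : ℕ) (θ : ℕ → ℤ) (S : ℤ)
    (mp mm : ℕ → ℕ)
    (hmpc : ∀ K, (mp K : ℝ) = 2 ^ (k+1) + 2 ^ k * (θ K : ℝ) - (S : ℝ))
    (hmmc : ∀ K, (mm K : ℝ) = 2 ^ (k+1) - 2 ^ k * (θ K : ℝ) + (S : ℝ))
    (hScast : (S : ℝ) = ∑ K ∈ range N, (θ K : ℝ))
    (y : ℕ → Y) (y0 : Y) (hy0 : y0 = ∑ K ∈ range N, ((2:ℝ) ^ k)⁻¹ • y K) :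
    (∑ K ∈ range N, ((mp K : ℝ) / 2 ^ (2*k+1)) • y K)
      - (∑ K ∈ range N, ((mm K : ℝ) / 2 ^ (2*k+1)) • y K)
    = ∑ K ∈ range N, ((θ K : ℝ) * ((2:ℝ) ^ k)⁻¹) • (y K - y0) := by
  have h2k : ((2:ℝ) ^ k) ≠ 0 := by positivity
  rw [← Finset.sum_sub_distrib]
  have e1 : ∀ K ∈ range N, ((mp K : ℝ) / 2 ^ (2*k+1)) • y K - ((mm K : ℝ) / 2 ^ (2*k+1)) • y K
      = ((θ K : ℝ) * ((2:ℝ) ^ k)⁻¹) • y K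
        - ((S : ℝ) * (((2:ℝ) ^ k)⁻¹ * ((2:ℝ) ^ k)⁻¹)) • y K := by
    intro K _
    rw [← sub_smul, ← sub_smul]
    congr 1
    rw [hmpc K, hmmc K]
    field_simp
    ring
  rw [Finset.sum_congr rfl e1, Finset.sum_sub_distrib]
  have e3 : ∑ K ∈ range N, ((S : ℝ) * (((2:ℝ) ^ k)⁻¹ * ((2:ℝ) ^ k)⁻¹)) • y K
      = ((S : ℝ) * ((2:ℝ) ^ k)⁻¹) • y0 := by
    rw [hy0, Finset.smul_sum]
    refine Finset.sum_congr rfl fun K _ => ?_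
    rw [smul_smul]
    congr 1
    ring
  rw [e3]
  have e4 : ∑ K ∈ range N, ((θ K : ℝ) * ((2:ℝ) ^ k)⁻¹) • (y K - y0)
      = (∑ K ∈ range N, ((θ K : ℝ) * ((2:ℝ) ^ k)⁻¹) • y K)
        - ∑ K ∈ range N, ((θ K : ℝ) * ((2:ℝ) ^ k)⁻¹) • y0 := by
    rw [← Finset.sum_sub_distrib]
    exact Finset.sum_congr rfl fun K _ => smul_sub _ _ _
  rw [e4]
  congr 1
  rw [← Finset.sum_smul, ← Finset.sum_mul, ← hScast]

end BmDiff

set_option maxHeartbeats 1000000 in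
/-- main Bellman lemma: there is an absolute constant `c > 0` such that for
every Banach space `X`, exponents `1 < p < ∞`, `1/p + 1/p' = 1`, `β ≥ 1`, every function
`B` on the Bellman domain with `0 ≤ B ≤ 4β F^{1/p} G^{1/p'}` and the concavity-with-gain
property, every `k ≥ 1` and every dyadic martingale of points `A n r` (`n ≤ k`, `r < 2^n`)
in the domain, the coefficients
`λ_{KL} = ⟨(f_K − f_{I₀})/2^k, (g_L − g_{I₀})/2^k⟩ + ⟨(f_L − f_{I₀})/2^k, (g_K − g_{I₀})/2^k⟩`
satisfy `Σ_{K,L} |λ_{KL}| ≤ c 2^{k/2} (B(A_{I₀}) − 2^{-k} Σ_I B(A_I))`. -/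
theorem bellman_main_estimate :
    ∃ c : ℝ, 0 < c ∧
      ∀ (X : Type) (_ : NormedAddCommGroup X) (_ : NormedSpace ℝ X)
        (p q β : ℝ), 1 < p → 1 / p + 1 / q = 1 → 1 ≤ β →
        ∀ B : X × ℝ × (X →L[ℝ] ℝ) × ℝ → ℝ,
        (∀ A ∈ BellmanDomain X p q, 0 ≤ B A ∧
            B A ≤ 4 * β * A.2.1 ^ (1 / p) * A.2.2.2 ^ (1 / q)) →
        (∀ A Ap Am, A ∈ BellmanDomain X p q → Ap ∈ BellmanDomain X p q →
            Am ∈ BellmanDomain X p q → A = (2⁻¹ : ℝ) • (Ap + Am) →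
            (B Ap + B Am) / 2 + |(Ap.2.2.1 - Am.2.2.1) (Ap.1 - Am.1)| ≤ B A) →
        ∀ (k : ℕ), 1 ≤ k →
        ∀ A : ℕ → ℕ → X × ℝ × (X →L[ℝ] ℝ) × ℝ,
        (∀ n r, n ≤ k → r < 2 ^ n → A n r ∈ BellmanDomain X p q) →
        (∀ n r, n < k → r < 2 ^ n →
            A n r = (2⁻¹ : ℝ) • (A (n + 1) (2 * r) + A (n + 1) (2 * r + 1))) →
        ∑ K ∈ Finset.range (2 ^ k), ∑ L ∈ Finset.range (2 ^ k),
            |((2 : ℝ) ^ (-(k : ℤ))) ^ 2 *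
                (((A k L).2.2.1 - (A 0 0).2.2.1) ((A k K).1 - (A 0 0).1) +
                 ((A k K).2.2.1 - (A 0 0).2.2.1) ((A k L).1 - (A 0 0).1))| ≤
          c * (2 : ℝ) ^ ((k : ℝ) / 2) *
            (B (A 0 0) -
              (2 : ℝ) ^ (-(k : ℤ)) * ∑ r ∈ Finset.range (2 ^ k), B (A k r)) := by
  refine ⟨7, by norm_num, ?_⟩
  intro X _ _ p q β hp hpq hβ B hB hcon k hk A hdom hmart
  -- exponent facts
  have hp0 : 0 < p := by linarith
  have hp1 : 1 ≤ p := hp.le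
  have h1p : 1/p < 1 := by rw [div_lt_one hp0]; exact hp
  have h1ppos : 0 < 1/p := by positivity
  have h1q : 1/q = 1 - 1/p := by linarith
  have h1qpos : 0 < 1/q := by rw [h1q]; linarith
  have hq0 : 0 < q := by
    rcases lt_trichotomy q 0 with h | h | h
    · exfalso
      have : 1/q < 0 := div_neg_of_pos_of_neg one_pos h
      linarith
    · exfalso
      rw [h] at h1qpos
      simp at h1qpos
    · exact h
  have hq1 : 1 ≤ q := by
    have h' : 1/q < 1 := by rw [h1q]; linarith
    rw [div_lt_one hq0] at h'
    exact h'.le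
  -- abbreviations
  set f0 := (A 0 0).1 with hf0def
  set g0 := (A 0 0).2.2.1 with hg0def
  set μ : ℕ → ℕ → ℝ :=
    fun K L => (((2:ℝ) ^ k)⁻¹ * ((2:ℝ) ^ k)⁻¹) * (((A k L).2.2.1 - g0) ((A k K).1 - f0))
    with hμdef
  set Δ : ℝ := B (A 0 0) - ((2:ℝ) ^ k)⁻¹ * ∑ r ∈ range (2 ^ k), B (A k r) with hΔdef
  -- leaf average of the martingale
  have leafavg : ∀ d n r, n + d ≤ k → r < 2 ^ n →
      A n r = ∑ j ∈ range (2 ^ d), (((2:ℝ) ^ d)⁻¹) • A (n + d) (2 ^ d * r + j) := by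
    intro d
    induction d with
    | zero =>
      intro n r _ _
      simp
    | succ d ih =>
      intro n r hnd hr
      have hnk : n < k := by omega
      rw [hmart n r hnk hr]
      have h1 := ih (n+1) (2*r) (by omega) (by rw [pow_succ]; omega)
      have h2 := ih (n+1) (2*r+1) (by omega) (by rw [pow_succ]; omega)
      rw [h1, h2]
      have hidx : n + (d + 1) = (n + 1) + d := by omega
      rw [hidx]
      have hsplit : 2 ^ (d + 1) = 2 ^ d + 2 ^ d := by rw [pow_succ]; omega
      rw [hsplit, Finset.sum_range_add]
      rw [smul_add, Finset.smul_sum, Finset.smul_sum]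
      congr 1
      · refine Finset.sum_congr rfl fun j hj => ?_
        rw [smul_smul]
        congr 1
        · rw [pow_succ, mul_inv]; ring
        · have : 2 ^ d * (2 * r) + j = (2 ^ d + 2 ^ d) * r + j := by ring
          rw [this]
      · refine Finset.sum_congr rfl fun j hj => ?_
        rw [smul_smul]
        congr 1
        · rw [pow_succ, mul_inv]; ring
        · have : 2 ^ d * (2 * r + 1) + j = (2 ^ d + 2 ^ d) * r + (2 ^ d + j) := by ring
          rw [this]
  have havg : A 0 0 = ∑ K ∈ range (2 ^ k), ((2:ℝ) ^ k)⁻¹ • A k K := by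
    have := leafavg k 0 0 (by omega) (by norm_num)
    simpa using this
  -- component versions of the average
  have havgf : f0 = ∑ K ∈ range (2 ^ k), ((2:ℝ) ^ k)⁻¹ • (A k K).1 := by
    rw [hf0def, havg, Prod.fst_sum]
    rfl
  have havgg : g0 = ∑ K ∈ range (2 ^ k), ((2:ℝ) ^ k)⁻¹ • (A k K).2.2.1 := by
    rw [hg0def, havg, Prod.snd_sum, Prod.snd_sum, Prod.fst_sum]
    rfl
  -- derived hypotheses for the combination lemmas
  have hleafD : ∀ K ∈ range (2 ^ k), A k K ∈ BellmanDomain X p q :=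
    fun K hK => hdom k K le_rfl (Finset.mem_range.mp hK)
  have hmemw : ∀ w : ℕ → ℝ, (∀ K, 0 ≤ w K) → (∑ K ∈ range (2 ^ k), w K) = 1 →
      (∑ K ∈ range (2 ^ k), w K • A k K) ∈ BellmanDomain X p q :=
    fun w hw hw1 => bm_mem_comb hp1 hq1 (2 ^ k) (A k) hleafD w hw hw1
  have hconc' : ∀ a b, a ∈ BellmanDomain X p q → b ∈ BellmanDomain X p q →
      (2⁻¹:ℝ) • (a + b) ∈ BellmanDomain X p q →
      (B a + B b) / 2 ≤ B ((2⁻¹:ℝ) • (a + b)) := by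
    intro a b ha hb hab
    have h' := hcon ((2⁻¹:ℝ) • (a + b)) a b hab ha hb rfl
    have habs : 0 ≤ |(a.2.2.1 - b.2.2.1) (a.1 - b.1)| := abs_nonneg _
    linarith
  -- THE CORE INEQUALITY
  have core : ∀ θ : ℕ → ℤ, (∀ K, |θ K| ≤ 1) →
      |∑ K ∈ range (2 ^ k), ∑ L ∈ range (2 ^ k), (θ K : ℝ) * (θ L : ℝ) * μ K L| ≤ Δ := by
    intro θ hθ
    set S : ℤ := ∑ K ∈ range (2 ^ k), θ K with hSdef
    have hSabs' : |S| ≤ 2 ^ k := by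
      calc |S| ≤ ∑ K ∈ range (2 ^ k), |θ K| := Finset.abs_sum_le_sum_abs _ _
        _ ≤ ∑ K ∈ range (2 ^ k), 1 := Finset.sum_le_sum fun K _ => hθ K
        _ = 2 ^ k := by simp
    have hippos : ∀ K, (0:ℤ) ≤ 2 ^ (k+1) + 2 ^ k * θ K - S := by
      intro K
      have h1 := abs_le.mp (hθ K)
      have h2 := abs_le.mp hSabs'
      have h2k : (0:ℤ) ≤ 2 ^ k := by positivity
      have hth : -(2 ^ k : ℤ) ≤ 2 ^ k * θ K := by nlinarith [h1.1]
      have hpow : (2:ℤ) ^ (k+1) = 2 ^ k * 2 := pow_succ 2 k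
      linarith [h2.2]
    have himpos : ∀ K, (0:ℤ) ≤ 2 ^ (k+1) - 2 ^ k * θ K + S := by
      intro K
      have h1 := abs_le.mp (hθ K)
      have h2 := abs_le.mp hSabs'
      have h2k : (0:ℤ) ≤ 2 ^ k := by positivity
      have hth : 2 ^ k * θ K ≤ (2 ^ k : ℤ) := by nlinarith [h1.2]
      have hpow : (2:ℤ) ^ (k+1) = 2 ^ k * 2 := pow_succ 2 k
      linarith [h2.1]
    set mp : ℕ → ℕ := fun K => (2 ^ (k+1) + 2 ^ k * θ K - S).toNat with hmpdef
    set mm : ℕ → ℕ := fun K => (2 ^ (k+1) - 2 ^ k * θ K + S).toNat with hmmdef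
    have hmpc : ∀ K, (mp K : ℝ) = 2 ^ (k+1) + 2 ^ k * (θ K : ℝ) - (S : ℝ) := by
      intro K
      have h0 : ((mp K : ℤ)) = 2 ^ (k+1) + 2 ^ k * θ K - S := Int.toNat_of_nonneg (hippos K)
      have h1 : ((mp K : ℤ) : ℝ) = ((2 ^ (k+1) + 2 ^ k * θ K - S : ℤ) : ℝ) := by
        exact_mod_cast congrArg (Int.cast : ℤ → ℝ) h0
      push_cast at h1
      exact_mod_cast h1
    have hmmc : ∀ K, (mm K : ℝ) = 2 ^ (k+1) - 2 ^ k * (θ K : ℝ) + (S : ℝ) := by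
      intro K
      have h0 : ((mm K : ℤ)) = 2 ^ (k+1) - 2 ^ k * θ K + S := Int.toNat_of_nonneg (himpos K)
      have h1 : ((mm K : ℤ) : ℝ) = ((2 ^ (k+1) - 2 ^ k * θ K + S : ℤ) : ℝ) := by
        exact_mod_cast congrArg (Int.cast : ℤ → ℝ) h0
      push_cast at h1
      exact_mod_cast h1
    have hScast : (S : ℝ) = ∑ K ∈ range (2 ^ k), (θ K : ℝ) := by
      rw [hSdef]; push_cast; ring
    have hsum_mp : (∑ K ∈ range (2 ^ k), mp K) = 2 ^ (2*k+1) := by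
      have hZ : ((∑ K ∈ range (2 ^ k), mp K : ℕ) : ℤ) = 2 ^ (2*k+1) := by
        push_cast
        rw [Finset.sum_congr rfl (fun K _ => Int.toNat_of_nonneg (hippos K)),
          Finset.sum_sub_distrib, Finset.sum_add_distrib, Finset.sum_const, ← Finset.mul_sum,
          Finset.sum_const, Finset.card_range, ← hSdef]
        simp only [nsmul_eq_mul]
        push_cast
        ring
      exact_mod_cast hZ
    have hsum_mm : (∑ K ∈ range (2 ^ k), mm K) = 2 ^ (2*k+1) := by
      have hZ : ((∑ K ∈ range (2 ^ k), mm K : ℕ) : ℤ) = 2 ^ (2*k+1) := by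
        push_cast
        rw [Finset.sum_congr rfl (fun K _ => Int.toNat_of_nonneg (himpos K)),
          Finset.sum_add_distrib, Finset.sum_sub_distrib, Finset.sum_const, ← Finset.mul_sum,
          Finset.sum_const, Finset.card_range, ← hSdef]
        simp only [nsmul_eq_mul]
        push_cast
        ring
      exact_mod_cast hZ
    have hBp := bm_concave_comb (BellmanDomain X p q) B (2 ^ k) (A k)
      hmemw hconc' (2*k+1) mp hsum_mp
    have hBm := bm_concave_comb (BellmanDomain X p q) B (2 ^ k) (A k)
      hmemw hconc' (2*k+1) mm hsum_mm
    have hApD : (∑ K ∈ range (2 ^ k), ((mp K : ℝ) / 2 ^ (2*k+1)) • A k K)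
        ∈ BellmanDomain X p q := by
      refine hmemw _ (fun K => by positivity) ?_
      rw [← Finset.sum_div,
        show (∑ K ∈ range (2 ^ k), (mp K : ℝ)) = 2 ^ (2*k+1) by exact_mod_cast hsum_mp]
      field_simp
    have hAmD : (∑ K ∈ range (2 ^ k), ((mm K : ℝ) / 2 ^ (2*k+1)) • A k K)
        ∈ BellmanDomain X p q := by
      refine hmemw _ (fun K => by positivity) ?_
      rw [← Finset.sum_div,
        show (∑ K ∈ range (2 ^ k), (mm K : ℝ)) = 2 ^ (2*k+1) by exact_mod_cast hsum_mm]
      field_simp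
    have hmid : A 0 0 = (2⁻¹:ℝ) • ((∑ K ∈ range (2 ^ k), ((mp K : ℝ) / 2 ^ (2*k+1)) • A k K)
        + ∑ K ∈ range (2 ^ k), ((mm K : ℝ) / 2 ^ (2*k+1)) • A k K) := by
      rw [havg, ← Finset.sum_add_distrib, Finset.smul_sum]
      refine Finset.sum_congr rfl fun K _ => ?_
      rw [← add_smul, smul_smul]
      congr 1
      rw [hmpc K, hmmc K]
      field_simp
      ring
    have hmain := hcon (A 0 0) _ _ (hdom 0 0 (Nat.zero_le k) (by norm_num)) hApD hAmD hmid
    have hdf : (∑ K ∈ range (2 ^ k), ((mp K : ℝ) / 2 ^ (2*k+1)) • A k K).1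
        - (∑ K ∈ range (2 ^ k), ((mm K : ℝ) / 2 ^ (2*k+1)) • A k K).1
        = ∑ K ∈ range (2 ^ k), ((θ K : ℝ) * ((2:ℝ) ^ k)⁻¹) • ((A k K).1 - f0) := by
      have c1 : (∑ K ∈ range (2 ^ k), ((mp K : ℝ) / 2 ^ (2*k+1)) • A k K).1
          = ∑ K ∈ range (2 ^ k), ((mp K : ℝ) / 2 ^ (2*k+1)) • (A k K).1 := by
        rw [Prod.fst_sum]; rfl
      have c2 : (∑ K ∈ range (2 ^ k), ((mm K : ℝ) / 2 ^ (2*k+1)) • A k K).1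
          = ∑ K ∈ range (2 ^ k), ((mm K : ℝ) / 2 ^ (2*k+1)) • (A k K).1 := by
        rw [Prod.fst_sum]; rfl
      rw [c1, c2]
      exact bm_diff (2 ^ k) k θ S mp mm hmpc hmmc hScast (fun K => (A k K).1) f0 havgf
    have hdg : (∑ K ∈ range (2 ^ k), ((mp K : ℝ) / 2 ^ (2*k+1)) • A k K).2.2.1
        - (∑ K ∈ range (2 ^ k), ((mm K : ℝ) / 2 ^ (2*k+1)) • A k K).2.2.1
        = ∑ K ∈ range (2 ^ k), ((θ K : ℝ) * ((2:ℝ) ^ k)⁻¹) • ((A k K).2.2.1 - g0) := by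
      have c1 : (∑ K ∈ range (2 ^ k), ((mp K : ℝ) / 2 ^ (2*k+1)) • A k K).2.2.1
          = ∑ K ∈ range (2 ^ k), ((mp K : ℝ) / 2 ^ (2*k+1)) • (A k K).2.2.1 := by
        rw [Prod.snd_sum, Prod.snd_sum, Prod.fst_sum]; rfl
      have c2 : (∑ K ∈ range (2 ^ k), ((mm K : ℝ) / 2 ^ (2*k+1)) • A k K).2.2.1
          = ∑ K ∈ range (2 ^ k), ((mm K : ℝ) / 2 ^ (2*k+1)) • (A k K).2.2.1 := by
        rw [Prod.snd_sum, Prod.snd_sum, Prod.fst_sum]; rfl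
      rw [c1, c2]
      exact bm_diff (2 ^ k) k θ S mp mm hmpc hmmc hScast (fun K => (A k K).2.2.1) g0 havgg
    have hpair : (∑ L ∈ range (2 ^ k), ((θ L : ℝ) * ((2:ℝ) ^ k)⁻¹) • ((A k L).2.2.1 - g0))
          (∑ K ∈ range (2 ^ k), ((θ K : ℝ) * ((2:ℝ) ^ k)⁻¹) • ((A k K).1 - f0))
        = ∑ K ∈ range (2 ^ k), ∑ L ∈ range (2 ^ k), (θ K : ℝ) * (θ L : ℝ) * μ K L := by
      have h1 : (∑ L ∈ range (2 ^ k), ((θ L : ℝ) * ((2:ℝ) ^ k)⁻¹) • ((A k L).2.2.1 - g0))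
            (∑ K ∈ range (2 ^ k), ((θ K : ℝ) * ((2:ℝ) ^ k)⁻¹) • ((A k K).1 - f0))
          = ∑ L ∈ range (2 ^ k), ∑ K ∈ range (2 ^ k), (θ K : ℝ) * (θ L : ℝ) * μ K L := by
        rw [ContinuousLinearMap.sum_apply]
        refine Finset.sum_congr rfl fun L _ => ?_
        rw [ContinuousLinearMap.smul_apply, smul_eq_mul, map_sum, Finset.mul_sum]
        refine Finset.sum_congr rfl fun K _ => ?_
        rw [map_smul, smul_eq_mul, hμdef]
        simp only []
        ring
      rw [h1, Finset.sum_comm]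
    rw [hdf, hdg, hpair] at hmain
    have hwB : (∑ K ∈ range (2 ^ k), ((mp K : ℝ) / 2 ^ (2*k+1)) * B (A k K)
          + ∑ K ∈ range (2 ^ k), ((mm K : ℝ) / 2 ^ (2*k+1)) * B (A k K)) / 2
        = ((2:ℝ) ^ k)⁻¹ * ∑ r ∈ range (2 ^ k), B (A k r) := by
      rw [← Finset.sum_add_distrib, Finset.sum_div, Finset.mul_sum]
      refine Finset.sum_congr rfl fun K _ => ?_
      rw [hmpc K, hmmc K]
      field_simp
      ring
    rw [hΔdef]
    linarith [hBp, hBm, hmain, hwB.symm.le, hwB.le]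
  -- BILINEAR BOUND
  have bilin : ∀ ε δ : ℕ → ℝ, (∀ i, ε i = 1 ∨ ε i = -1) → (∀ i, δ i = 1 ∨ δ i = -1) →
      |∑ K ∈ range (2 ^ k), ∑ L ∈ range (2 ^ k), ε K * δ L * (μ K L + μ L K)| ≤ 4 * Δ := by
    intro ε δ hε hδ
    classical
    set ζ1 : ℕ → ℤ := fun K => if ε K = δ K then (if ε K = 1 then 1 else -1) else 0 with hζ1
    set ζ2 : ℕ → ℤ := fun K => if ε K = δ K then 0 else (if ε K = 1 then 1 else -1) with hζ2
    have hz1 : ∀ K, ((ζ1 K : ℝ)) = (ε K + δ K) / 2 := by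
      intro K
      rcases hε K with h1 | h1 <;> rcases hδ K with h2 | h2 <;>
        simp [hζ1, h1, h2] <;> norm_num
    have hz2 : ∀ K, ((ζ2 K : ℝ)) = (ε K - δ K) / 2 := by
      intro K
      rcases hε K with h1 | h1 <;> rcases hδ K with h2 | h2 <;>
        simp [hζ2, h1, h2] <;> norm_num
    have hb1 : ∀ K, |ζ1 K| ≤ 1 := by
      intro K
      rcases hε K with h1 | h1 <;> rcases hδ K with h2 | h2 <;>
        simp [hζ1, h1, h2] <;> norm_num
    have hb2 : ∀ K, |ζ2 K| ≤ 1 := by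
      intro K
      rcases hε K with h1 | h1 <;> rcases hδ K with h2 | h2 <;>
        simp [hζ2, h1, h2] <;> norm_num
    have hq1 := core ζ1 hb1
    have hq2 := core ζ2 hb2
    have swap : ∑ K ∈ range (2 ^ k), ∑ L ∈ range (2 ^ k), ε K * δ L * μ L K
        = ∑ K ∈ range (2 ^ k), ∑ L ∈ range (2 ^ k), δ K * ε L * μ K L := by
      rw [Finset.sum_comm]
      exact Finset.sum_congr rfl fun K _ => Finset.sum_congr rfl fun L _ => by ring
    have expand : ∑ K ∈ range (2 ^ k), ∑ L ∈ range (2 ^ k), ε K * δ L * (μ K L + μ L K)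
        = 2 * (∑ K ∈ range (2 ^ k), ∑ L ∈ range (2 ^ k), (ζ1 K : ℝ) * (ζ1 L : ℝ) * μ K L)
          - 2 * (∑ K ∈ range (2 ^ k), ∑ L ∈ range (2 ^ k), (ζ2 K : ℝ) * (ζ2 L : ℝ) * μ K L) := by
      calc ∑ K ∈ range (2 ^ k), ∑ L ∈ range (2 ^ k), ε K * δ L * (μ K L + μ L K)
          = (∑ K ∈ range (2 ^ k), ∑ L ∈ range (2 ^ k), ε K * δ L * μ K L)
            + ∑ K ∈ range (2 ^ k), ∑ L ∈ range (2 ^ k), ε K * δ L * μ L K := by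
            simp only [mul_add, Finset.sum_add_distrib]
        _ = (∑ K ∈ range (2 ^ k), ∑ L ∈ range (2 ^ k), ε K * δ L * μ K L)
            + ∑ K ∈ range (2 ^ k), ∑ L ∈ range (2 ^ k), δ K * ε L * μ K L := by rw [swap]
        _ = ∑ K ∈ range (2 ^ k), ∑ L ∈ range (2 ^ k), (ε K * δ L * μ K L + δ K * ε L * μ K L) := by
            rw [← Finset.sum_add_distrib]
            exact Finset.sum_congr rfl fun K _ => (Finset.sum_add_distrib).symm
        _ = ∑ K ∈ range (2 ^ k), ∑ L ∈ range (2 ^ k),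
              (2 * ((ζ1 K : ℝ) * (ζ1 L : ℝ) * μ K L) - 2 * ((ζ2 K : ℝ) * (ζ2 L : ℝ) * μ K L)) := by
            refine Finset.sum_congr rfl fun K _ => Finset.sum_congr rfl fun L _ => ?_
            rw [hz1 K, hz1 L, hz2 K, hz2 L]
            ring
        _ = 2 * (∑ K ∈ range (2 ^ k), ∑ L ∈ range (2 ^ k), (ζ1 K : ℝ) * (ζ1 L : ℝ) * μ K L)
            - 2 * (∑ K ∈ range (2 ^ k), ∑ L ∈ range (2 ^ k), (ζ2 K : ℝ) * (ζ2 L : ℝ) * μ K L) := by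
            simp only [Finset.sum_sub_distrib, ← Finset.mul_sum]
    rw [expand]
    calc |2 * (∑ K ∈ range (2 ^ k), ∑ L ∈ range (2 ^ k), (ζ1 K : ℝ) * (ζ1 L : ℝ) * μ K L)
          - 2 * (∑ K ∈ range (2 ^ k), ∑ L ∈ range (2 ^ k), (ζ2 K : ℝ) * (ζ2 L : ℝ) * μ K L)|
        ≤ |2 * (∑ K ∈ range (2 ^ k), ∑ L ∈ range (2 ^ k), (ζ1 K : ℝ) * (ζ1 L : ℝ) * μ K L)|
          + |2 * (∑ K ∈ range (2 ^ k), ∑ L ∈ range (2 ^ k), (ζ2 K : ℝ) * (ζ2 L : ℝ) * μ K L)| :=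
          abs_sub _ _
      _ = 2 * |∑ K ∈ range (2 ^ k), ∑ L ∈ range (2 ^ k), (ζ1 K : ℝ) * (ζ1 L : ℝ) * μ K L|
          + 2 * |∑ K ∈ range (2 ^ k), ∑ L ∈ range (2 ^ k), (ζ2 K : ℝ) * (ζ2 L : ℝ) * μ K L| := by
          rw [abs_mul, abs_mul]
          norm_num
      _ ≤ 4 * Δ := by linarith
  -- FINISH
  have hΔ0 : 0 ≤ Δ := by
    have h' := core (fun _ => 0) (by intro K; simp)
    simp only [Int.cast_zero, zero_mul, Finset.sum_const_zero, abs_zero] at h'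
    exact h'
  have hmat := bm_matrix (2 ^ k) (fun K L => μ K L + μ L K) (4 * Δ) bilin
  have hgoal_lhs : ∑ K ∈ range (2 ^ k), ∑ L ∈ range (2 ^ k),
      |((2 : ℝ) ^ (-(k : ℤ))) ^ 2 *
          (((A k L).2.2.1 - g0) ((A k K).1 - f0) +
           ((A k K).2.2.1 - g0) ((A k L).1 - f0))|
      = ∑ K ∈ range (2 ^ k), ∑ L ∈ range (2 ^ k), |μ K L + μ L K| := by
    refine Finset.sum_congr rfl fun K _ => Finset.sum_congr rfl fun L _ => ?_
    congr 1
    rw [hμdef]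
    simp only []
    rw [zpow_neg, zpow_natCast]
    ring
  rw [hgoal_lhs]
  have hsqrtN : Real.sqrt ((2:ℝ) ^ k) = (2:ℝ) ^ ((k : ℝ) / 2) := by
    rw [Real.sqrt_eq_rpow, ← Real.rpow_natCast 2 k, ← Real.rpow_mul (by norm_num)]
    congr 1
    ring
  have hsqrt3 : Real.sqrt 3 ≤ 7/4 := by
    rw [show (7:ℝ)/4 = Real.sqrt ((7/4) ^ 2) by rw [Real.sqrt_sq]; norm_num]
    exact Real.sqrt_le_sqrt (by norm_num)
  have hNcast : ((2 ^ k : ℕ) : ℝ) = (2:ℝ) ^ k := by push_cast; ring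
  have hfinal : Real.sqrt 3 * Real.sqrt ((2 ^ k : ℕ)) * (4 * Δ)
      ≤ 7 * (2:ℝ) ^ ((k : ℝ) / 2) * Δ := by
    rw [hNcast, hsqrtN]
    have hpow : (0:ℝ) ≤ (2:ℝ) ^ ((k : ℝ) / 2) := Real.rpow_nonneg (by norm_num) _
    nlinarith [mul_nonneg hpow hΔ0, Real.sqrt_nonneg 3]
  calc ∑ K ∈ range (2 ^ k), ∑ L ∈ range (2 ^ k), |μ K L + μ L K|
      ≤ Real.sqrt 3 * Real.sqrt ((2 ^ k : ℕ)) * (4 * Δ) := hmat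
    _ ≤ 7 * (2:ℝ) ^ ((k : ℝ) / 2) * Δ := hfinal
    _ = 7 * (2:ℝ) ^ ((k : ℝ) / 2) *
          (B (A 0 0) - (2 : ℝ) ^ (-(k : ℤ)) * ∑ r ∈ range (2 ^ k), B (A k r)) := by
        rw [hΔdef, zpow_neg, zpow_natCast]
end
end
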